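/- For a monoid H, the reduced finitary power monoid P_{fin,1}(H) is atomic if and only if H has no unit of order two and the only idempotent element of H is the identity 1_H. -/

import Mathlib

open scoped Pointwise

/-- Two-sided divisibility in a monoid: `x` divides `y` if `y = u * x * v` for some `u, v`. -/
def DvdTS {M : Type*} [Monoid M] (x y : M) : Prop := ∃ u v : M, y = u * x * v

/-- A unit-divisor is a divisor of the identity. -/
def IsUnitDivisor {M : Type*} [Monoid M] (x : M) : Prop := DvdTS x 1

/-- `x` is a proper divisor of `y` if `x` divides `y` but `y` does not divide `x`. -/
def IsProperDivisorTS {M : Type*} [Monoid M] (x y : M) : Prop := DvdTS x y ∧ ¬ DvdTS y x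

/-- An atom is a non-unit that is not a product of two non-units. -/
def IsAtomTS {M : Type*} [Monoid M] (a : M) : Prop :=
  ¬ IsUnit a ∧ ∀ b c : M, a = b * c → IsUnit b ∨ IsUnit c

/-- A quark is a non-unit-divisor all of whose proper divisors are unit-divisors. -/
def IsQuarkTS {M : Type*} [Monoid M] (a : M) : Prop :=
  ¬ IsUnitDivisor a ∧ ∀ b : M, IsProperDivisorTS b a → IsUnitDivisor b

/-- An irreducible is a non-unit-divisor with no factorization `a = b * c` into proper
divisors that are not unit-divisors. -/
def IsIrredTS {M : Type*} [Monoid M] (a : M) : Prop :=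
  ¬ IsUnitDivisor a ∧
    ¬ ∃ b c : M, a = b * c ∧ IsProperDivisorTS b a ∧ IsProperDivisorTS c a ∧
      ¬ IsUnitDivisor b ∧ ¬ IsUnitDivisor c

def DedekindFiniteM (M : Type*) [Monoid M] : Prop := ∀ x y : M, x * y = 1 → y * x = 1

/-- ACC on principal two-sided ideals: no infinite sequence of consecutive proper divisors. -/
def ACCPrincipalTS (M : Type*) [Monoid M] : Prop :=
  ¬ ∃ f : ℕ → M, ∀ n : ℕ, IsProperDivisorTS (f (n + 1)) (f n)

/-- Factorable: every non-unit-divisor is a (non-empty) product of irreducibles. -/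
def FactorableM (M : Type*) [Monoid M] : Prop :=
  ∀ x : M, ¬ IsUnitDivisor x →
    ∃ l : List M, l ≠ [] ∧ (∀ a ∈ l, IsIrredTS a) ∧ l.prod = x

/-- Atomic: every non-unit-divisor is a (non-empty) product of atoms. -/
def AtomicM (M : Type*) [Monoid M] : Prop :=
  ∀ x : M, ¬ IsUnitDivisor x →
    ∃ l : List M, l ≠ [] ∧ (∀ a ∈ l, IsAtomTS a) ∧ l.prod = x

/-- The finitary power monoid: non-empty finite subsets of `H` under setwise multiplication. -/
def PfinM (H : Type*) [Monoid H] : Submonoid (Set H) where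
  carrier := {X : Set H | X.Finite ∧ X.Nonempty}
  mul_mem' := fun hX hY => ⟨hX.1.mul hY.1, hX.2.mul hY.2⟩
  one_mem' := ⟨Set.finite_one, 1, Set.mem_one.mpr rfl⟩

/-- The restricted finitary power monoid: non-empty finite subsets of `H` containing a unit. -/
def PfinTimes (H : Type*) [Monoid H] : Submonoid (Set H) where
  carrier := {X : Set H | X.Finite ∧ ∃ u ∈ X, IsUnit u}
  mul_mem' := by
    rintro X Y ⟨hXf, u, hu, hu'⟩ ⟨hYf, v, hv, hv'⟩
    exact ⟨hXf.mul hYf, u * v, Set.mul_mem_mul hu hv, hu'.mul hv'⟩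
  one_mem' := ⟨Set.finite_one, 1, Set.mem_one.mpr rfl, isUnit_one⟩

/-- The reduced finitary power monoid: finite subsets of `H` containing `1`. -/
def PfinOne (H : Type*) [Monoid H] : Submonoid (Set H) where
  carrier := {X : Set H | X.Finite ∧ (1 : H) ∈ X}
  mul_mem' := by
    rintro X Y ⟨hXf, hX1⟩ ⟨hYf, hY1⟩
    exact ⟨hXf.mul hYf, by simpa using Set.mul_mem_mul hX1 hY1⟩
  one_mem' := ⟨Set.finite_one, Set.mem_one.mpr rfl⟩

lemma mem_PfinM {H : Type*} [Monoid H] {X : Set H} :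
    X ∈ PfinM H ↔ X.Finite ∧ X.Nonempty := Iff.rfl

lemma mem_PfinTimes {H : Type*} [Monoid H] {X : Set H} :
    X ∈ PfinTimes H ↔ X.Finite ∧ ∃ u ∈ X, IsUnit u := Iff.rfl

lemma mem_PfinOne {H : Type*} [Monoid H] {X : Set H} :
    X ∈ PfinOne H ↔ X.Finite ∧ (1 : H) ∈ X := Iff.rfl

/-- Acyclic: `u * x * v ≠ x` whenever `u` or `v` is a non-unit. -/
def AcyclicM (M : Type*) [Monoid M] : Prop :=
  ∀ u v x : M, (¬ IsUnit u ∨ ¬ IsUnit v) → u * x * v ≠ x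

/-- Unit-cancellative: `x * y ≠ x ≠ y * x` whenever `y` is a non-unit. -/
def UnitCancellativeM (M : Type*) [Monoid M] : Prop :=
  ∀ x y : M, ¬ IsUnit y → x * y ≠ x ∧ y * x ≠ x

/-- Strongly unit-cancellative: `x * y ≠ x ≠ y * x` whenever `y ≠ 1`. -/
def StrongUnitCancellativeM (M : Type*) [Monoid M] : Prop :=
  ∀ x y : M, y ≠ 1 → x * y ≠ x ∧ y * x ≠ x

/-- Torsion-free: the identity is the only element with finitely many powers. -/
def TorsionFreeM (M : Type*) [Monoid M] : Prop :=
  ∀ x : M, (Set.range fun k : ℕ => x ^ k).Finite → x = 1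

/-- Cancellative monoid. -/
def CancellativeM (M : Type*) [Monoid M] : Prop :=
  ∀ a x y : M, (a * x = a * y → x = y) ∧ (x * a = y * a → x = y)

/-- The set of lengths of (irreducible) factorizations of `x`, with the conventions
`L(1) = {0}` and `L(u) = ∅` for a unit-divisor `u ≠ 1`. -/
def LengthSet {M : Type*} [Monoid M] (x : M) : Set ℕ :=
  {n | (x = 1 ∧ n = 0) ∨
    (¬ IsUnitDivisor x ∧
      ∃ l : List M, l.length = n ∧ l ≠ [] ∧ (∀ a ∈ l, IsIrredTS a) ∧ l.prod = x)}

/-- The system of lengths: the family of non-empty length sets. -/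
def SystemOfLengths (M : Type*) [Monoid M] : Set (Set ℕ) :=
  {L | L.Nonempty ∧ ∃ x : M, LengthSet x = L}

/-! Every factor of a product in `P_{fin,1}(H)` is contained in the product, because all
elements contain `1`. If some `x ≠ 1` has `x² ∈ {1, x}`, then `{1, x}` is idempotent and the
only elements of the monoid contained in it are `{1}` and itself, so it is not a product of
atoms. Otherwise every `{1, x}` with `x ≠ 1` is an atom, and `X` factors by induction on `|X|`:
in a factorization `X = YZ` into non-units either both factors are proper subsets of `X`, or,
say, `X = XZ`; then `Xz ⊆ X` for some `z ∈ Z \ {1}`, whence `X = (X \ {z}) {1, z}`. -/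

namespace Set

variable {H : Type*} [MulOneClass H] {X : Set H} {z : H}

lemma diff_singleton_mul_pair (h1 : (1 : H) ∈ X) (hz : z ≠ 1) (hXz : ∀ x ∈ X, x * z ∈ X) :
    (X \ {z}) * {1, z} = X := by
  refine subset_antisymm ?_ fun x hx => ?_
  · rintro _ ⟨x, ⟨hx, -⟩, y, rfl | rfl, rfl⟩
    exacts [by simpa using hx, hXz x hx]
  · by_cases hxz : x = z
    · exact ⟨1, ⟨h1, hz.symm⟩, z, by simp, by simp [hxz]⟩
    · exact ⟨x, ⟨hx, hxz⟩, 1, by simp, mul_one x⟩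

lemma pair_mul_diff_singleton (h1 : (1 : H) ∈ X) (hz : z ≠ 1) (hzX : ∀ x ∈ X, z * x ∈ X) :
    {1, z} * (X \ {z}) = X := by
  refine subset_antisymm ?_ fun x hx => ?_
  · rintro _ ⟨y, rfl | rfl, x, ⟨hx, -⟩, rfl⟩
    exacts [by simpa using hx, hzX x hx]
  · by_cases hxz : x = z
    · exact ⟨z, by simp, 1, ⟨h1, hz.symm⟩, by simp [hxz]⟩
    · exact ⟨1, by simp, x, ⟨hx, hxz⟩, one_mul x⟩

end Set

namespace PfinOne

variable {H : Type*} [Monoid H] {x : H}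

lemma one_mem_coe (X : PfinOne H) : (1 : H) ∈ (X : Set H) := X.2.2

lemma finite_coe (X : PfinOne H) : (X : Set H).Finite := X.2.1

lemma subset_mul_left (X Y : PfinOne H) : (X : Set H) ⊆ ↑(X * Y) :=
  fun x hx => by simpa using Set.mul_mem_mul hx (one_mem_coe Y)

lemma subset_mul_right (X Y : PfinOne H) : (Y : Set H) ⊆ ↑(X * Y) :=
  fun y hy => by simpa using Set.mul_mem_mul (one_mem_coe X) hy

lemma subset_prod_of_mem {l : List (PfinOne H)} {a : PfinOne H} (ha : a ∈ l) :
    (a : Set H) ⊆ ↑l.prod := by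
  induction l with
  | nil => simp at ha
  | cons b l ih =>
    rw [List.prod_cons]
    rcases List.mem_cons.mp ha with rfl | ha
    · exact subset_mul_left _ _
    · exact (ih ha).trans (subset_mul_right _ _)

lemma eq_one_iff_subset {X : PfinOne H} : X = 1 ↔ (X : Set H) ⊆ {1} :=
  ⟨by rintro rfl; rfl,
    fun h => Subtype.ext (h.antisymm (Set.singleton_subset_iff.2 (one_mem_coe X)))⟩

lemma isUnitDivisor_iff {X : PfinOne H} : IsUnitDivisor X ↔ X = 1 := by
  refine ⟨fun ⟨U, V, h⟩ => eq_one_iff_subset.2 ?_, fun h => ⟨1, 1, by simp [h]⟩⟩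
  calc (X : Set H) ⊆ ↑(U * X * V) := (subset_mul_right U X).trans (subset_mul_left _ V)
    _ = {1} := by rw [← h]; rfl

lemma isUnit_iff {X : PfinOne H} : IsUnit X ↔ X = 1 :=
  ⟨fun ⟨u, hu⟩ => isUnitDivisor_iff.1 ⟨1, ↑u⁻¹, by rw [one_mul, ← hu, Units.mul_inv]⟩,
    fun h => h ▸ isUnit_one⟩

def pair (x : H) : PfinOne H :=
  ⟨{1, x}, (Set.finite_singleton x).insert 1, Set.mem_insert 1 _⟩

lemma coe_pair (x : H) : (pair x : Set H) = {1, x} := rfl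

lemma eq_one_or_eq_pair_of_subset {Y : PfinOne H} (h : (Y : Set H) ⊆ {1, x}) :
    Y = 1 ∨ Y = pair x := by
  have h1 : (1 : H) ∈ (Y : Set H) := one_mem_coe Y
  rcases Set.Nonempty.subset_pair_iff_eq ⟨1, h1⟩ |>.1 h with h | h | h
  · exact Or.inl (Subtype.ext h)
  · rw [h, Set.mem_singleton_iff] at h1
    exact Or.inl (Subtype.ext (by rw [h, ← h1]; rfl))
  · exact Or.inr (Subtype.ext h)

lemma pair_mul_pair (h : x * x ∈ ({1, x} : Set H)) : pair x * pair x = pair x := by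
  refine Subtype.ext (subset_antisymm ?_ (subset_mul_left _ _))
  rintro _ ⟨a, ha, b, hb, rfl⟩
  rcases ha with rfl | rfl <;> rcases hb with rfl | rfl <;> simp_all [coe_pair]

lemma isAtomTS_pair_iff : IsAtomTS (pair x) ↔ x * x ∉ ({1, x} : Set H) := by
  refine ⟨fun hx hsq => ?_, fun hsq => ⟨fun hx => hsq ?_, fun b c hbc => ?_⟩⟩
  · exact hx.1 ((hx.2 _ _ (pair_mul_pair hsq).symm).elim id id)
  · have hx1 : x ∈ ((1 : PfinOne H) : Set H) := isUnit_iff.1 hx ▸ Set.mem_insert_of_mem 1 rfl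
    simp_all
  · rcases eq_one_or_eq_pair_of_subset (hbc ▸ subset_mul_left b c) with rfl | rfl
    · exact Or.inl isUnit_one
    rcases eq_one_or_eq_pair_of_subset (hbc ▸ subset_mul_right _ c) with rfl | rfl
    · exact Or.inr isUnit_one
    refine absurd ?_ hsq
    rw [← coe_pair, hbc]
    exact Set.mul_mem_mul (Set.mem_insert_of_mem 1 rfl) (Set.mem_insert_of_mem 1 rfl)

lemma exists_ne_one_mem {Z : PfinOne H} (hZ : Z ≠ 1) : ∃ z ∈ (Z : Set H), z ≠ 1 :=
  Set.not_subset.1 (mt eq_one_iff_subset.2 hZ)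

lemma exists_ssubset_mul_pair {X Z : PfinOne H} (h : X * Z = X) (hZ : Z ≠ 1) :
    ∃ z ≠ 1, ∃ X' : PfinOne H, (X' : Set H) ⊂ X ∧ X = X' * pair z := by
  obtain ⟨z, hzZ, hz⟩ := exists_ne_one_mem hZ
  have hXz : ∀ x ∈ (X : Set H), x * z ∈ (X : Set H) :=
    fun x hx => h ▸ Set.mul_mem_mul hx hzZ
  have hzmem : z ∈ (X : Set H) := by simpa using hXz 1 (one_mem_coe X)
  refine ⟨z, hz, ⟨(X : Set H) \ {z}, (finite_coe X).sdiff, one_mem_coe X, hz.symm⟩,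
    Set.sdiff_singleton_ssubset.2 hzmem, Subtype.ext ?_⟩
  exact (Set.diff_singleton_mul_pair (one_mem_coe X) hz hXz).symm

lemma exists_ssubset_pair_mul {X Y : PfinOne H} (h : Y * X = X) (hY : Y ≠ 1) :
    ∃ z ≠ 1, ∃ X' : PfinOne H, (X' : Set H) ⊂ X ∧ X = pair z * X' := by
  obtain ⟨z, hzY, hz⟩ := exists_ne_one_mem hY
  have hzX : ∀ x ∈ (X : Set H), z * x ∈ (X : Set H) :=
    fun x hx => h ▸ Set.mul_mem_mul hzY hx
  have hzmem : z ∈ (X : Set H) := by simpa using hzX 1 (one_mem_coe X)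
  refine ⟨z, hz, ⟨(X : Set H) \ {z}, (finite_coe X).sdiff, one_mem_coe X, hz.symm⟩,
    Set.sdiff_singleton_ssubset.2 hzmem, Subtype.ext ?_⟩
  exact (Set.pair_mul_diff_singleton (one_mem_coe X) hz hzX).symm

lemma mem_closure_isAtomTS (hpair : ∀ x : H, x ≠ 1 → IsAtomTS (pair x)) (X : PfinOne H) :
    X ∈ Submonoid.closure {a : PfinOne H | IsAtomTS a} := by
  induction hn : (X : Set H).ncard using Nat.strong_induction_on generalizing X with
  | _ n ih =>
  have ih' : ∀ Y : PfinOne H, (Y : Set H) ⊂ X → Y ∈ Submonoid.closure {a | IsAtomTS a} :=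
    fun Y hY => ih _ (hn ▸ Set.ncard_lt_ncard hY (finite_coe X)) Y rfl
  have hpair' (z : H) (hz : z ≠ 1) : pair z ∈ Submonoid.closure {a | IsAtomTS a} :=
    Submonoid.subset_closure (hpair z hz)
  by_cases hX1 : X = 1
  · exact hX1 ▸ Submonoid.one_mem _
  by_cases hX : IsAtomTS X
  · exact Submonoid.subset_closure hX
  obtain ⟨Y, Z, hYZ, hY, hZ⟩ : ∃ Y Z, X = Y * Z ∧ Y ≠ 1 ∧ Z ≠ 1 := by
    simpa [IsAtomTS, isUnit_iff, hX1] using hX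
  by_cases hYX : Y = X
  · obtain ⟨z, hz, X', hX', hX'z⟩ := exists_ssubset_mul_pair (hYX ▸ hYZ).symm hZ
    exact hX'z ▸ Submonoid.mul_mem _ (ih' X' hX') (hpair' z hz)
  by_cases hZX : Z = X
  · obtain ⟨z, hz, X', hX', hX'z⟩ := exists_ssubset_pair_mul (hZX ▸ hYZ).symm hY
    exact hX'z ▸ Submonoid.mul_mem _ (hpair' z hz) (ih' X' hX')
  have hYss : (Y : Set H) ⊂ X := (hYZ ▸ subset_mul_left Y Z).ssubset_of_ne (hYX ∘ Subtype.ext)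
  have hZss : (Z : Set H) ⊂ X := (hYZ ▸ subset_mul_right Y Z).ssubset_of_ne (hZX ∘ Subtype.ext)
  exact hYZ ▸ Submonoid.mul_mem _ (ih' Y hYss) (ih' Z hZss)

lemma atomicM_of_isAtomTS_pair (hpair : ∀ x : H, x ≠ 1 → IsAtomTS (pair x)) :
    AtomicM (PfinOne H) := by
  intro X hX
  obtain ⟨l, hl, rfl⟩ := Submonoid.exists_list_of_mem_closure (mem_closure_isAtomTS hpair X)
  refine ⟨l, ?_, hl, rfl⟩
  rintro rfl
  exact hX (isUnitDivisor_iff.2 List.prod_nil)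

lemma not_atomicM_of_mul_self_mem (hx : x ≠ 1) (hsq : x * x ∈ ({1, x} : Set H)) :
    ¬ AtomicM (PfinOne H) := by
  intro hA
  have hne : pair x ≠ 1 := fun h => hx (by simpa [coe_pair] using eq_one_iff_subset.1 h)
  obtain ⟨l, hl, hatoms, hprod⟩ := hA (pair x) (mt isUnitDivisor_iff.1 hne)
  obtain ⟨a, ha⟩ := List.exists_mem_of_ne_nil l hl
  rcases eq_one_or_eq_pair_of_subset (hprod ▸ subset_prod_of_mem ha) with rfl | rfl
  · exact (hatoms _ ha).1 isUnit_one
  · exact isAtomTS_pair_iff.1 (hatoms _ ha) hsq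

lemma atomicM_iff : AtomicM (PfinOne H) ↔ ∀ x : H, x ≠ 1 → x * x ∉ ({1, x} : Set H) :=
  ⟨fun hA _ hx hsq => not_atomicM_of_mul_self_mem hx hsq hA,
    fun h => atomicM_of_isAtomTS_pair fun x hx => isAtomTS_pair_iff.2 (h x hx)⟩

end PfinOne

/-- `P_{fin,1}(H)` is atomic iff `H` has no unit of order two and its only
idempotent is the identity. -/
theorem pfinOne_atomic_iff (H : Type*) [Monoid H] :
    AtomicM (PfinOne H) ↔
      (¬ ∃ u : H, IsUnit u ∧ u ≠ 1 ∧ u * u = 1) ∧ (∀ e : H, e * e = e → e = 1) := by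
  rw [PfinOne.atomicM_iff]
  refine ⟨fun h => ⟨fun ⟨u, _, hu, huu⟩ => h u hu (Or.inl huu),
    fun e he => by_contra fun hne => h e hne (Or.inr he)⟩, fun ⟨hunit, hidem⟩ x hx hsq => ?_⟩
  rcases hsq with hsq | hsq
  · exact hunit ⟨x, ⟨⟨x, x, hsq, hsq⟩, rfl⟩, hx, hsq⟩
  · exact hx (hidem x hsq)
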